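/- arXiv:1902.05178 — 3 statements merged into one kernel-verified Lean document; each statement's English description precedes it below -/
import Mathlib

section
/- (Variant 1 vulnerability in the model) Consider the unmitigated bounds-check code: 0: load r1 [#array − 1] (loads the array length L); 1: binop[ge] r2 r0 r1; 2: branch r2 @oob; 3: load r0 [r0 + #array]; 4: load r0 [r0 + #timing]; with @oob returning 0. There exist an initial index value v ≥ L in r0 and a branch-predictor state B predicting not-taken at instruction 2, such that the speculative semantics, starting from an empty reorder buffer, reaches a state in which the S-Load-Execute rule resolves the load at instruction 3 with address #array + v and subsequently resolves the load at instruction 4 with address #timing + M[#array + v]; whereas no architectural execution of this program with index v ≥ L ever performs a load from address #array + v or from any address of the form #timing + x. -/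
/-- Binary operations of the architecture. -/
inductive Op where
  | eq | ge | add | sub | mul | div | shl | shr | and | or | xor
  deriving DecidableEq

/-- Instructions of the architecture. -/
inductive Instr where
  | const  (rd : Fin 16) (k : ℤ)
  | load   (rd : Fin 16) (ra : Fin 16) (k : ℤ)
  | store  (ra : Fin 16) (k : ℤ) (rv : Fin 16)
  | binop  (op : Op) (rd : Fin 16) (ra : Fin 16) (rb : Fin 16)
  | branch (rc : Fin 16) (d : ℤ)
  | jump   (rd : Fin 16)
  deriving DecidableEq

/-- A program maps integer program counters to instructions. -/
abbrev Prog := ℤ → Instr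

/-- Architectural states: program counter, register file, memory. -/
structure ArchState where
  pc : ℤ
  R : Fin 16 → ℤ
  M : ℤ → ℤ

/-- Semantics of the binary operations. -/
def opDenote : Op → ℤ → ℤ → ℤ
  | .eq, a, b => if a = b then 1 else 0
  | .ge, a, b => if b ≤ a then 1 else 0
  | .add, a, b => a + b
  | .sub, a, b => a - b
  | .mul, a, b => a * b
  | .div, a, b => a / b
  | .shl, a, b => a * 2 ^ b.toNat
  | .shr, a, b => a / 2 ^ b.toNat
  | .and, a, b => Int.land a b
  | .or, a, b => Int.lor a b
  | .xor, a, b => Int.xor a b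

/-- The architectural small-step semantics `ρ, σ → σ'`. -/
inductive Step (ρ : Prog) : ArchState → ArchState → Prop
  | const {σ : ArchState} {rd : Fin 16} {k : ℤ} :
      ρ σ.pc = .const rd k →
      Step ρ σ ⟨σ.pc + 1, Function.update σ.R rd k, σ.M⟩
  | load {σ : ArchState} {rd ra : Fin 16} {k : ℤ} :
      ρ σ.pc = .load rd ra k →
      Step ρ σ ⟨σ.pc + 1, Function.update σ.R rd (σ.M (σ.R ra + k)), σ.M⟩
  | store {σ : ArchState} {ra : Fin 16} {k : ℤ} {rv : Fin 16} :
      ρ σ.pc = .store ra k rv →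
      Step ρ σ ⟨σ.pc + 1, σ.R, Function.update σ.M (σ.R ra + k) (σ.R rv)⟩
  | binop {σ : ArchState} {op : Op} {rd ra rb : Fin 16} :
      ρ σ.pc = .binop op rd ra rb →
      Step ρ σ ⟨σ.pc + 1, Function.update σ.R rd (opDenote op (σ.R ra) (σ.R rb)), σ.M⟩
  | branchTaken {σ : ArchState} {rc : Fin 16} {d : ℤ} :
      ρ σ.pc = .branch rc d → σ.R rc ≠ 0 →
      Step ρ σ ⟨σ.pc + d, σ.R, σ.M⟩
  | branchNotTaken {σ : ArchState} {rc : Fin 16} {d : ℤ} :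
      ρ σ.pc = .branch rc d → σ.R rc = 0 →
      Step ρ σ ⟨σ.pc + 1, σ.R, σ.M⟩
  | jump {σ : ArchState} {rd : Fin 16} :
      ρ σ.pc = .jump rd →
      Step ρ σ ⟨σ.R rd, σ.R, σ.M⟩

/-- The architectural semantics as a (deterministic, total) function. -/
def archStep (ρ : Prog) (σ : ArchState) : ArchState :=
  match ρ σ.pc with
  | .const rd k => ⟨σ.pc + 1, Function.update σ.R rd k, σ.M⟩
  | .load rd ra k => ⟨σ.pc + 1, Function.update σ.R rd (σ.M (σ.R ra + k)), σ.M⟩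
  | .store ra k rv => ⟨σ.pc + 1, σ.R, Function.update σ.M (σ.R ra + k) (σ.R rv)⟩
  | .binop op rd ra rb => ⟨σ.pc + 1, Function.update σ.R rd (opDenote op (σ.R ra) (σ.R rb)), σ.M⟩
  | .branch rc d => if σ.R rc ≠ 0 then ⟨σ.pc + d, σ.R, σ.M⟩ else ⟨σ.pc + 1, σ.R, σ.M⟩
  | .jump rd => ⟨σ.R rd, σ.R, σ.M⟩

/-- `applyE ρ σ m` : the unique architectural state reached after `m` transitions from `σ`
(the paper's `apply(ρ, σ, {e_i})`). -/
def applyE (ρ : Prog) (σ : ArchState) (m : ℕ) : ArchState := (archStep ρ)^[m] σ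

/-- A reorder buffer entry `⟨pc, v_⊥, b⟩`: instruction address, optional computed value,
and recorded branch prediction (`none` for non-branches). -/
structure Entry where
  pc : ℤ
  val : Option ℤ
  pred : Option Bool

/-- The non-speculating instructions (const, load, store, binop). -/
def nospecB : Instr → Bool
  | .const _ _ => true
  | .load _ _ _ => true
  | .store _ _ _ => true
  | .binop _ _ _ _ => true
  | _ => false

/-- Resolve a register value through a reorder buffer given newest-entry-first;
`none` means unresolved (⊥). -/
def lookupRAux (ρ : Prog) (R : Fin 16 → ℤ) : List Entry → Fin 16 → Option ℤ
  | [], r => some (R r)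
  | e :: E, r =>
    match ρ e.pc with
    | .load rd _ _ => if rd = r then e.val else lookupRAux ρ R E r
    | .binop _ rd _ _ => if rd = r then e.val else lookupRAux ρ R E r
    | _ => lookupRAux ρ R E r

/-- `lookupR(ρ, R, E, r)`: resolve register `r` through the reorder buffer `E`
(oldest entry first, as in the paper). -/
def lookupR (ρ : Prog) (R : Fin 16 → ℤ) (E : List Entry) (r : Fin 16) : Option ℤ :=
  lookupRAux ρ R E.reverse r

/-- Resolve a memory value through a reorder buffer given newest-entry-first. -/
def lookupMAux (ρ : Prog) (R : Fin 16 → ℤ) (M : ℤ → ℤ) : List Entry → ℤ → Option ℤ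
  | [], a => some (M a)
  | e :: E, a =>
    match ρ e.pc with
    | .store ra k rv =>
      match lookupRAux ρ R E ra with
      | none => none
      | some va => if va + k = a then lookupRAux ρ R E rv else lookupMAux ρ R M E a
    | _ => lookupMAux ρ R M E a

/-- `lookupM(ρ, R, M, E, a)`: resolve memory location `a` through the reorder buffer `E`
(oldest entry first, as in the paper). -/
def lookupM (ρ : Prog) (R : Fin 16 → ℤ) (M : ℤ → ℤ) (E : List Entry) (a : ℤ) : Option ℤ :=
  lookupMAux ρ R M E.reverse a

/-- Microarchitectural (speculative) states `⟨σ, spc, E, B⟩`,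
parametric in the branch-predictor state type `BP`. -/
structure SpecState (BP : Type) where
  σ : ArchState
  spc : ℤ
  rob : List Entry
  bp : BP

/-- Issue rules: S-Seq-Issue and S-Branch-Issue. -/
inductive IssueStep {BP : Type} (ρ : Prog) (predict : BP → ℤ → Bool) :
    SpecState BP → SpecState BP → Prop
  | seq {μ : SpecState BP} :
      nospecB (ρ μ.spc) = true →
      IssueStep ρ predict μ ⟨μ.σ, μ.spc + 1, μ.rob ++ [⟨μ.spc, none, none⟩], μ.bp⟩
  | branch {μ : SpecState BP} {rc : Fin 16} {d : ℤ} :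
      ρ μ.spc = .branch rc d →
      IssueStep ρ predict μ
        ⟨μ.σ, (if predict μ.bp μ.spc then μ.spc + d else μ.spc + 1),
          μ.rob ++ [⟨μ.spc, none, some (predict μ.bp μ.spc)⟩], μ.bp⟩

/-- Execute rules: S-Load-Execute and S-Op-Execute. -/
inductive ExecStep {BP : Type} (ρ : Prog) : SpecState BP → SpecState BP → Prop
  | load {σ : ArchState} {spc : ℤ} {bp : BP} {E E' : List Entry} {p : ℤ}
      {rd ra : Fin 16} {k va v : ℤ} :
      ρ p = .load rd ra k →
      lookupR ρ σ.R E ra = some va →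
      lookupM ρ σ.R σ.M E (va + k) = some v →
      ExecStep ρ ⟨σ, spc, E ++ ⟨p, none, none⟩ :: E', bp⟩
                 ⟨σ, spc, E ++ ⟨p, some v, none⟩ :: E', bp⟩
  | op {σ : ArchState} {spc : ℤ} {bp : BP} {E E' : List Entry} {p : ℤ}
      {op : Op} {rd ra rb : Fin 16} {va vb : ℤ} :
      ρ p = .binop op rd ra rb →
      lookupR ρ σ.R E ra = some va →
      lookupR ρ σ.R E rb = some vb →
      ExecStep ρ ⟨σ, spc, E ++ ⟨p, none, none⟩ :: E', bp⟩
                 ⟨σ, spc, E ++ ⟨p, some (opDenote op va vb), none⟩ :: E', bp⟩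

/-- Commit rules: S-NS-Commit, S-Predict-Success and S-Predict-Fail. -/
inductive CommitStep {BP : Type} (ρ : Prog) (bpUpd : BP → Bool → BP) :
    SpecState BP → SpecState BP → Prop
  | ns {σ σ' : ArchState} {spc : ℤ} {bp : BP} {v : Option ℤ} {b : Option Bool}
      {E : List Entry} :
      nospecB (ρ σ.pc) = true →
      Step ρ σ σ' →
      CommitStep ρ bpUpd ⟨σ, spc, ⟨σ.pc, v, b⟩ :: E, bp⟩ ⟨σ', spc, E, bp⟩
  | predictSuccess {pc : ℤ} {R : Fin 16 → ℤ} {M : ℤ → ℤ} {spc : ℤ} {bp : BP} {b : Bool}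
      {E : List Entry} {rc : Fin 16} {d : ℤ} :
      ρ pc = .branch rc d →
      b = decide (R rc ≠ 0) →
      CommitStep ρ bpUpd ⟨⟨pc, R, M⟩, spc, ⟨pc, none, some b⟩ :: E, bp⟩
        ⟨⟨if R rc ≠ 0 then pc + d else pc + 1, R, M⟩, spc, E, bpUpd bp b⟩
  | predictFail {pc : ℤ} {R : Fin 16 → ℤ} {M : ℤ → ℤ} {spc : ℤ} {bp : BP} {b : Bool}
      {E : List Entry} {rc : Fin 16} {d : ℤ} :
      ρ pc = .branch rc d →
      b = !decide (R rc ≠ 0) →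
      CommitStep ρ bpUpd ⟨⟨pc, R, M⟩, spc, ⟨pc, none, some b⟩ :: E, bp⟩
        ⟨⟨if R rc ≠ 0 then pc + d else pc + 1, R, M⟩, spc, [], bpUpd bp (!b)⟩

/-- A step of the speculative semantics is an issue, execute or commit step. -/
def SStep {BP : Type} (ρ : Prog) (predict : BP → ℤ → Bool) (bpUpd : BP → Bool → BP)
    (μ μ' : SpecState BP) : Prop :=
  IssueStep ρ predict μ μ' ∨ ExecStep ρ μ μ' ∨ CommitStep ρ bpUpd μ μ'

/-- Agreement of `apply(ρ, σ, {e_i})` with the microarchitectural state at depth `m`: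
registers and memory resolved through the first `m` reorder-buffer entries are ⊥ or match
the architectural state after `m` transitions, and the program counters line up. -/
def agreesAt {BP : Type} (ρ : Prog) (μ : SpecState BP) (m : ℕ) : Prop :=
  (∀ r : Fin 16, lookupR ρ μ.σ.R (μ.rob.take m) r = none ∨
      lookupR ρ μ.σ.R (μ.rob.take m) r = some ((applyE ρ μ.σ m).R r)) ∧
  (∀ l : ℤ, lookupM ρ μ.σ.R μ.σ.M (μ.rob.take m) l = none ∨
      lookupM ρ μ.σ.R μ.σ.M (μ.rob.take m) l = some ((applyE ρ μ.σ m).M l)) ∧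
  (match μ.rob[m]? with
   | some e => (applyE ρ μ.σ m).pc = e.pc
   | none => (applyE ρ μ.σ m).pc = μ.spc)

/-- The microarchitectural state mis-speculates at reorder-buffer depth `m`:
the entry at depth `m` is a branch whose recorded prediction disagrees with the
condition evaluated in the architectural state after `m` transitions. -/
def misspecAt {BP : Type} (ρ : Prog) (μ : SpecState BP) (m : ℕ) : Prop :=
  ∃ (e : Entry) (rc : Fin 16) (d : ℤ) (b : Bool),
    μ.rob[m]? = some e ∧ ρ e.pc = .branch rc d ∧ e.pred = some b ∧
    b = !decide ((applyE ρ μ.σ m).R rc ≠ 0)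

/-- Reachability from a state with empty reorder buffer. -/
def ReachableEmpty {BP : Type} (ρ : Prog) (predict : BP → ℤ → Bool) (bpUpd : BP → Bool → BP)
    (μ : SpecState BP) : Prop :=
  ∃ μ₀ : SpecState BP, μ₀.rob = [] ∧ Relation.ReflTransGen (SStep ρ predict bpUpd) μ₀ μ

/-- The unmitigated bounds-check code of Figure 3 (register `r4` holds 0, `r15` the
return address; the array length is stored at `arrayBase - 1`; `@oob` is at pc 6). -/
def vulnProg (arrayBase timingBase : ℤ) : Prog := fun pc =>
  if pc = 0 then .load 1 4 (arrayBase - 1)       -- load r1 [#array - 1]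
  else if pc = 1 then .binop .ge 2 0 1           -- r2 := (index ≥ length)
  else if pc = 2 then .branch 2 4                -- (vulnerable) bounds check, @oob = 6
  else if pc = 3 then .load 0 0 arrayBase        -- load [array + index]
  else if pc = 4 then .load 0 0 timingBase       -- load [timing + val]
  else if pc = 5 then .jump 15                   -- return
  else if pc = 6 then .const 0 0                 -- @oob: out of bounds => 0
  else .jump 15                                  -- return

/-- The S-Load-Execute rule resolves, in state `μ`, a (not yet executed) load entry for
the instruction at `p` with address `l`. -/
def ResolvesLoadAt {BP : Type} (ρ : Prog) (μ : SpecState BP) (p l : ℤ) : Prop :=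
  ∃ (E : List Entry) (e : Entry) (E' : List Entry) (rd ra : Fin 16) (k va v : ℤ),
    μ.rob = E ++ e :: E' ∧ e.pc = p ∧ e.val = none ∧ ρ e.pc = .load rd ra k ∧
    lookupR ρ μ.σ.R E ra = some va ∧ va + k = l ∧
    lookupM ρ μ.σ.R μ.σ.M E l = some v

/-! Architecturally the index is compared with the length before the branch at 2, so an
out-of-bounds index sends the run to `@oob`, which returns to pc 100 and stays there: pcs 3
and 4 are never reached. Speculatively, the predictor lets both loads be issued past the
unresolved branch. The first takes its index from the committed registers, the second takes
its address from the value the first left in the reorder buffer, and since the program has no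
stores, every memory lookup falls through to committed memory, which yields the
out-of-bounds value `M[#array + v]`. -/

section Architectural

variable {ρ : Prog}

theorem applyE_zero (σ : ArchState) : applyE ρ σ 0 = σ := rfl

theorem applyE_succ (σ : ArchState) (n : ℕ) :
    applyE ρ σ (n + 1) = archStep ρ (applyE ρ σ n) :=
  Function.iterate_succ_apply' _ _ _

theorem applyE_add_of_archStep_eq_self {σ : ArchState} {m : ℕ}
    (hfix : archStep ρ (applyE ρ σ m) = applyE ρ σ m) (n : ℕ) :
    applyE ρ σ (n + m) = applyE ρ σ m := by
  rw [applyE, Function.iterate_add_apply]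
  exact Function.iterate_fixed hfix n

end Architectural

section Speculative

variable {BP : Type} {ρ : Prog} {predict : BP → ℤ → Bool} {bpUpd : BP → Bool → BP}
  {σ : ArchState} {spc : ℤ} {E E' : List Entry} {bp : BP}

theorem SStep.issue_nospec (h : nospecB (ρ spc) = true) :
    SStep ρ predict bpUpd ⟨σ, spc, E, bp⟩ ⟨σ, spc + 1, E ++ [⟨spc, none, none⟩], bp⟩ :=
  Or.inl (IssueStep.seq h)

theorem SStep.issue_branch_of_predict_false {rc : Fin 16} {d : ℤ}
    (h : ρ spc = .branch rc d) (hb : predict bp spc = false) :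
    SStep ρ predict bpUpd ⟨σ, spc, E, bp⟩
      ⟨σ, spc + 1, E ++ [⟨spc, none, some false⟩], bp⟩ := by
  have := IssueStep.branch (predict := predict) (μ := ⟨σ, spc, E, bp⟩) h
  simp only [hb] at this
  exact Or.inl this

section LoadExecute

variable {p : ℤ} {rd ra : Fin 16} {k va v : ℤ} (hload : ρ p = .load rd ra k)
  (hR : lookupR ρ σ.R E ra = some va) (hM : lookupM ρ σ.R σ.M E (va + k) = some v)
include hload hR hM

theorem SStep.execute_load :
    SStep ρ predict bpUpd ⟨σ, spc, E ++ ⟨p, none, none⟩ :: E', bp⟩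
      ⟨σ, spc, E ++ ⟨p, some v, none⟩ :: E', bp⟩ :=
  Or.inr (Or.inl (ExecStep.load hload hR hM))

theorem resolvesLoadAt_of_lookup :
    ResolvesLoadAt ρ (⟨σ, spc, E ++ ⟨p, none, none⟩ :: E', bp⟩ : SpecState BP) p (va + k) :=
  ⟨E, _, E', rd, ra, k, va, v, rfl, rfl, rfl, hload, hR, rfl, hM⟩

end LoadExecute

theorem lookupMAux_of_forall_ne_store (R : Fin 16 → ℤ) (M : ℤ → ℤ) (a : ℤ) :
    ∀ E : List Entry, (∀ e ∈ E, ∀ ra k rv, ρ e.pc ≠ .store ra k rv) →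
      lookupMAux ρ R M E a = some (M a)
  | [], _ => rfl
  | e :: E, h => by
    have ih := lookupMAux_of_forall_ne_store R M a E fun e' he' => h e' (.tail _ he')
    unfold lookupMAux
    split
    · exact absurd ‹_› (h e (.head _) _ _ _)
    · exact ih

theorem lookupM_of_forall_ne_store (R : Fin 16 → ℤ) (M : ℤ → ℤ) (a : ℤ)
    (h : ∀ e ∈ E, ∀ ra k rv, ρ e.pc ≠ .store ra k rv) :
    lookupM ρ R M E a = some (M a) :=
  lookupMAux_of_forall_ne_store R M a _ fun e he => h e (List.mem_reverse.mp he)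

end Speculative

section VulnProg

variable (arrayBase timingBase : ℤ)

theorem vulnProg_ne_store (p : ℤ) (ra : Fin 16) (k : ℤ) (rv : Fin 16) :
    vulnProg arrayBase timingBase p ≠ .store ra k rv := by
  unfold vulnProg
  split_ifs <;> simp

theorem vulnProg_pc_applyE_of_le_index (R₀ : Fin 16 → ℤ) (M₀ : ℤ → ℤ)
    (hzero : R₀ 4 = 0) (hret : R₀ 15 = 100) {L v : ℤ} (hL : M₀ (arrayBase - 1) = L)
    (hv : L ≤ v) (n : ℕ) :
    (applyE (vulnProg arrayBase timingBase) ⟨0, Function.update R₀ 0 v, M₀⟩ n).pc =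
      [0, 1, 2, 6, 7].getD n 100 := by
  set ρ := vulnProg arrayBase timingBase
  set σ₀ : ArchState := ⟨0, Function.update R₀ 0 v, M₀⟩
  set R₂ := Function.update (Function.update (Function.update R₀ 0 v) 1 L) 2 1
  have h1 : applyE ρ σ₀ 1 = ⟨1, Function.update (Function.update R₀ 0 v) 1 L, M₀⟩ := by
    simp [σ₀, ρ, applyE, archStep, vulnProg, hzero, hL]
  have h2 : applyE ρ σ₀ 2 = ⟨2, R₂, M₀⟩ := by
    rw [applyE_succ, h1]; simp [ρ, archStep, vulnProg, R₂, opDenote, hv]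
  have h3 : applyE ρ σ₀ 3 = ⟨6, R₂, M₀⟩ := by
    rw [applyE_succ, h2]; simp [ρ, archStep, vulnProg, R₂]
  have h4 : applyE ρ σ₀ 4 = ⟨7, Function.update R₂ 0 0, M₀⟩ := by
    rw [applyE_succ, h3]; simp [ρ, archStep, vulnProg]
  have h5 : applyE ρ σ₀ 5 = ⟨100, Function.update R₂ 0 0, M₀⟩ := by
    rw [applyE_succ, h4]; simp [ρ, archStep, vulnProg, R₂, hret]
  have hfix : archStep ρ (applyE ρ σ₀ 5) = applyE ρ σ₀ 5 := by
    rw [h5]; simp [ρ, archStep, vulnProg, R₂, hret]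
  rcases lt_or_ge n 5 with hn | hn
  · interval_cases n <;> simp [σ₀, applyE_zero, h1, h2, h3, h4]
  · obtain ⟨k, rfl⟩ := Nat.exists_eq_add_of_le' hn
    rw [applyE_add_of_archStep_eq_self hfix, h5]
    simp

theorem vulnProg_speculative_leak (σ : ArchState) (B : ℤ → Bool) (hB : B 2 = false) :
    ∃ μ₁ μ₂ : SpecState (ℤ → Bool),
      Relation.ReflTransGen
        (SStep (vulnProg arrayBase timingBase) (fun bp pc => bp pc) (fun bp _ => bp))
        ⟨σ, 0, [], B⟩ μ₁ ∧
      ResolvesLoadAt (vulnProg arrayBase timingBase) μ₁ 3 (σ.R 0 + arrayBase) ∧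
      Relation.ReflTransGen
        (SStep (vulnProg arrayBase timingBase) (fun bp pc => bp pc) (fun bp _ => bp))
        μ₁ μ₂ ∧
      ResolvesLoadAt (vulnProg arrayBase timingBase) μ₂ 4
        (σ.M (σ.R 0 + arrayBase) + timingBase) := by
  set ρ := vulnProg arrayBase timingBase
  have hmem (E : List Entry) (a : ℤ) : lookupM ρ σ.R σ.M E a = some (σ.M a) :=
    lookupM_of_forall_ne_store _ _ _ fun e _ => vulnProg_ne_store _ _ e.pc
  let E₀ : List Entry := [⟨0, none, none⟩, ⟨1, none, none⟩, ⟨2, none, some false⟩]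
  have hidx : lookupR ρ σ.R E₀ 0 = some (σ.R 0) := by simp [E₀, ρ, lookupR, lookupRAux, vulnProg]
  have hval : lookupR ρ σ.R (E₀ ++ [⟨3, some (σ.M (σ.R 0 + arrayBase)), none⟩]) 0 =
      some (σ.M (σ.R 0 + arrayBase)) := by
    simp [E₀, ρ, lookupR, lookupRAux, vulnProg]
  refine ⟨⟨σ, 5, E₀ ++ [⟨3, none, none⟩, ⟨4, none, none⟩], B⟩,
    ⟨σ, 5, E₀ ++ [⟨3, some (σ.M (σ.R 0 + arrayBase)), none⟩, ⟨4, none, none⟩], B⟩,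
    ?_, resolvesLoadAt_of_lookup (by rfl) hidx (hmem _ _), ?_, ?_⟩
  · exact ((((Relation.ReflTransGen.single
      (SStep.issue_nospec (σ := σ) (spc := 0) (E := []) (bp := B) (by rfl))).tail
      (SStep.issue_nospec (by rfl))).tail
      (SStep.issue_branch_of_predict_false (by rfl) hB)).tail
      (SStep.issue_nospec (by rfl))).tail
      (SStep.issue_nospec (by rfl))
  · exact .single (SStep.execute_load (by rfl) hidx (hmem _ _))
  · simpa using resolvesLoadAt_of_lookup (E' := []) (by rfl) hval (hmem _ _)

end VulnProg

theorem variant1_attack_general (arrayBase timingBase : ℤ) (R₀ : Fin 16 → ℤ) (M₀ : ℤ → ℤ)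
    (hzero : R₀ 4 = 0) (hret : R₀ 15 = 100)
    (L : ℤ) (hL : M₀ (arrayBase - 1) = L) :
    ∃ (v : ℤ) (B : ℤ → Bool), L ≤ v ∧ B 2 = false ∧
      (∃ μ₁ μ₂ : SpecState (ℤ → Bool),
        Relation.ReflTransGen
          (SStep (vulnProg arrayBase timingBase) (fun bp pc => bp pc) (fun bp _ => bp))
          ⟨⟨0, Function.update R₀ 0 v, M₀⟩, 0, [], B⟩ μ₁ ∧
        ResolvesLoadAt (vulnProg arrayBase timingBase) μ₁ 3 (v + arrayBase) ∧
        Relation.ReflTransGen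
          (SStep (vulnProg arrayBase timingBase) (fun bp pc => bp pc) (fun bp _ => bp))
          μ₁ μ₂ ∧
        ResolvesLoadAt (vulnProg arrayBase timingBase) μ₂ 4
          (M₀ (v + arrayBase) + timingBase)) ∧
      (∀ v' : ℤ, L ≤ v' → ∀ n : ℕ,
        (applyE (vulnProg arrayBase timingBase) ⟨0, Function.update R₀ 0 v', M₀⟩ n).pc ≠ 3 ∧
        (applyE (vulnProg arrayBase timingBase) ⟨0, Function.update R₀ 0 v', M₀⟩ n).pc ≠ 4) := by
  refine ⟨L, fun _ => false, le_rfl, rfl, ?_, fun v' hv' n => ?_⟩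
  · simpa using vulnProg_speculative_leak arrayBase timingBase
      ⟨0, Function.update R₀ 0 L, M₀⟩ (fun _ => false) rfl
  · rw [vulnProg_pc_applyE_of_le_index arrayBase timingBase R₀ M₀ hzero hret hL hv' n]
    rcases lt_or_ge n 5 with hn | hn
    · interval_cases n <;> simp
    · rw [List.getD_eq_default _ _ (show [(0 : ℤ), 1, 2, 6, 7].length ≤ n from hn)]
      simp

/-- **Variant 1 vulnerability in the model.** There exist an index `v ≥ L`
and a branch-predictor state predicting not-taken at instruction 2 such that the
speculative semantics, from an empty reorder buffer, reaches a state resolving the load at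
instruction 3 with address `#array + v`, and subsequently resolves the load at
instruction 4 with address `#timing + M[#array + v]`; whereas no architectural execution
with any index `v' ≥ L` ever executes the load at instruction 3 (from `#array + v'`) or
the load at instruction 4 (from any address of the form `#timing + x`). -/
theorem variant1_attack (arrayBase timingBase : ℤ) (R₀ : Fin 16 → ℤ) (M₀ : ℤ → ℤ)
    (hzero : R₀ 4 = 0) (hret : R₀ 15 = 100)
    (L : ℤ) (hL : M₀ (arrayBase - 1) = L) (hLpos : 0 ≤ L) :
    ∃ (v : ℤ) (B : ℤ → Bool), L ≤ v ∧ B 2 = false ∧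
      (∃ μ₁ μ₂ : SpecState (ℤ → Bool),
        Relation.ReflTransGen
          (SStep (vulnProg arrayBase timingBase) (fun bp pc => bp pc) (fun bp _ => bp))
          ⟨⟨0, Function.update R₀ 0 v, M₀⟩, 0, [], B⟩ μ₁ ∧
        ResolvesLoadAt (vulnProg arrayBase timingBase) μ₁ 3 (v + arrayBase) ∧
        Relation.ReflTransGen
          (SStep (vulnProg arrayBase timingBase) (fun bp pc => bp pc) (fun bp _ => bp))
          μ₁ μ₂ ∧
        ResolvesLoadAt (vulnProg arrayBase timingBase) μ₂ 4
          (M₀ (v + arrayBase) + timingBase)) ∧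
      (∀ v' : ℤ, L ≤ v' → ∀ n : ℕ,
        (applyE (vulnProg arrayBase timingBase) ⟨0, Function.update R₀ 0 v', M₀⟩ n).pc ≠ 3 ∧
        (applyE (vulnProg arrayBase timingBase) ⟨0, Function.update R₀ 0 v', M₀⟩ n).pc ≠ 4) :=
  variant1_attack_general arrayBase timingBase R₀ M₀ hzero hret L hL
end

section
/- (Correctness of the cache-extended μ-architecture) The cache-extended semantics is a correct implementation of the architectural semantics in the paper's sense: for every program ρ, every n ∈ ℕ and architectural states σ, σ' with ρ, σ →ⁿ σ' in the architectural semantics, and every cache state C (a list of at most C_max addresses), there exist m ∈ ℕ and a cache state C' such that the cache-extended semantics takes ⟨σ, C⟩ to ⟨σ', C'⟩ in m steps; moreover m equals n plus the number of uncached memory accesses encountered along the way, so n ≤ m ≤ 2n. -/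
/-- LRU update: prepend `a`, remove any other occurrence of `a`, truncate to length `n`. -/
def lru (n : ℕ) (C : List ℤ) (a : ℤ) : List ℤ := (a :: C.filter (· ≠ a)).take n

/-- States of the cache-extended μ-architecture. -/
structure CState where
  σ : ArchState
  C : List ℤ

/-- The cache-extended semantics; the `Bool` flag marks the extra penalty step taken by an
uncached memory access (Uncached-Load / Uncached-Store). -/
inductive CStep (ρ : Prog) (n : ℕ) : CState → Bool → CState → Prop
  | uncachedLoad {σ : ArchState} {C : List ℤ} {rd ra : Fin 16} {k : ℤ} :
      ρ σ.pc = .load rd ra k → σ.R ra + k ∉ C →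
      CStep ρ n ⟨σ, C⟩ true ⟨σ, lru n C (σ.R ra + k)⟩
  | uncachedStore {σ : ArchState} {C : List ℤ} {ra : Fin 16} {k : ℤ} {rv : Fin 16} :
      ρ σ.pc = .store ra k rv → σ.R ra + k ∉ C →
      CStep ρ n ⟨σ, C⟩ true ⟨σ, lru n C (σ.R ra + k)⟩
  | cachedLoad {σ : ArchState} {C : List ℤ} {rd ra : Fin 16} {k : ℤ} :
      ρ σ.pc = .load rd ra k → σ.R ra + k ∈ C →
      CStep ρ n ⟨σ, C⟩ false
        ⟨⟨σ.pc + 1, Function.update σ.R rd (σ.M (σ.R ra + k)), σ.M⟩, lru n C (σ.R ra + k)⟩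
  | cachedStore {σ : ArchState} {C : List ℤ} {ra : Fin 16} {k : ℤ} {rv : Fin 16} :
      ρ σ.pc = .store ra k rv → σ.R ra + k ∈ C →
      CStep ρ n ⟨σ, C⟩ false
        ⟨⟨σ.pc + 1, σ.R, Function.update σ.M (σ.R ra + k) (σ.R rv)⟩, lru n C (σ.R ra + k)⟩
  | other {σ σ' : ArchState} {C : List ℤ} :
      (∀ (rd ra : Fin 16) (k : ℤ), ρ σ.pc ≠ .load rd ra k) →
      (∀ (ra : Fin 16) (k : ℤ) (rv : Fin 16), ρ σ.pc ≠ .store ra k rv) →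
      Step ρ σ σ' →
      CStep ρ n ⟨σ, C⟩ false ⟨σ', C⟩

/-- `CTrace ρ n m u s s'`: the cache-extended semantics takes `s` to `s'` in `m` steps,
`u` of which are uncached-access penalty steps. -/
inductive CTrace (ρ : Prog) (n : ℕ) : ℕ → ℕ → CState → CState → Prop
  | refl (s : CState) : CTrace ρ n 0 0 s s
  | tail {m u : ℕ} {s t t' : CState} {b : Bool} :
      CTrace ρ n m u s t → CStep ρ n t b t' →
      CTrace ρ n (m + 1) (u + (if b then 1 else 0)) s t'

/-- `n`-fold iteration of the architectural small-step relation: `ρ, σ →ⁿ σ'`. -/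
inductive StepN (ρ : Prog) : ℕ → ArchState → ArchState → Prop
  | refl (σ : ArchState) : StepN ρ 0 σ σ
  | tail {n : ℕ} {σ σ' σ'' : ArchState} :
      StepN ρ n σ σ' → Step ρ σ' σ'' → StepN ρ (n + 1) σ σ''

/-!
Every architectural step is simulated by one step of the cache-extended semantics, preceded by a
single penalty step when a load or store misses the cache. The penalty step inserts the accessed
address into the cache, and since `Cmax > 0` the LRU update keeps it, so the retried access hits.
Chaining these simulations along `ρ, σ →ⁿ σ'` gives `n + u` steps with `u ≤ n` misses.
-/

lemma mem_lru {n : ℕ} (hn : 0 < n) (C : List ℤ) (a : ℤ) : a ∈ lru n C a := by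
  obtain ⟨n, rfl⟩ := Nat.exists_eq_add_one_of_ne_zero hn.ne'
  simp [lru]

lemma CTrace.trans {ρ : Prog} {N m u m' u' : ℕ} {s t t' : CState}
    (h₁ : CTrace ρ N m u s t) (h₂ : CTrace ρ N m' u' t t') :
    CTrace ρ N (m + m') (u + u') s t' := by
  induction h₂ with
  | refl => exact h₁
  | tail _ hs ih =>
      rw [← Nat.add_assoc, ← Nat.add_assoc]
      exact (ih h₁).tail hs

lemma Step.exists_cTrace {ρ : Prog} {Cmax : ℕ} (hCmax : 0 < Cmax) {σ σ' : ArchState}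
    (h : Step ρ σ σ') (C : List ℤ) :
    ∃ u ≤ 1, ∃ C' : List ℤ, CTrace ρ Cmax (1 + u) u ⟨σ, C⟩ ⟨σ', C'⟩ := by
  have hstep := h
  cases h with
  | @load _ ra k hι =>
      by_cases hit : σ.R ra + k ∈ C
      · exact ⟨0, zero_le_one, _, (CTrace.refl _).tail (CStep.cachedLoad hι hit)⟩
      · exact ⟨1, le_rfl, _, ((CTrace.refl _).tail (CStep.uncachedLoad hι hit)).tail
          (CStep.cachedLoad hι (mem_lru hCmax C _))⟩
  | @store ra k _ hι =>
      by_cases hit : σ.R ra + k ∈ C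
      · exact ⟨0, zero_le_one, _, (CTrace.refl _).tail (CStep.cachedStore hι hit)⟩
      · exact ⟨1, le_rfl, _, ((CTrace.refl _).tail (CStep.uncachedStore hι hit)).tail
          (CStep.cachedStore hι (mem_lru hCmax C _))⟩
  | const hι | binop hι | branchTaken hι _ | branchNotTaken hι _ | jump hι =>
      exact ⟨0, zero_le_one, C, (CTrace.refl _).tail
        (CStep.other (by simp [hι]) (by simp [hι]) hstep)⟩

theorem cache_extension_correct_general (ρ : Prog) (Cmax : ℕ) (hCmax : 0 < Cmax)
    (n : ℕ) (σ σ' : ArchState) (harch : StepN ρ n σ σ')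
    (C : List ℤ) :
    ∃ (u : ℕ) (C' : List ℤ), u ≤ n ∧
      CTrace ρ Cmax (n + u) u ⟨σ, C⟩ ⟨σ', C'⟩ := by
  induction harch with
  | refl => exact ⟨0, C, le_rfl, CTrace.refl _⟩
  | @tail n _ _ _ _ hstep ih =>
      obtain ⟨u, C₁, hu, htrace⟩ := ih
      obtain ⟨v, hv, C₂, hlast⟩ := hstep.exists_cTrace hCmax C₁
      refine ⟨u + v, C₂, by omega, ?_⟩
      rw [show n + 1 + (u + v) = n + u + (1 + v) by omega]
      exact htrace.trans hlast

/-- **Correctness of the cache-extended μ-architecture.** For every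
program `ρ`, every `n` and architectural states `σ, σ'` with `ρ, σ →ⁿ σ'`, and every
cache state `C` of at most `Cmax` addresses, there are a cache state `C'` and a number
`u ≤ n` of uncached accesses encountered along the way such that the cache-extended
semantics takes `⟨σ, C⟩` to `⟨σ', C'⟩` in `m = n + u` steps (so `n ≤ m ≤ 2n`). -/
theorem cache_extension_correct (ρ : Prog) (Cmax : ℕ) (hCmax : 0 < Cmax)
    (n : ℕ) (σ σ' : ArchState) (harch : StepN ρ n σ σ')
    (C : List ℤ) (hlen : C.length ≤ Cmax) :
    ∃ (u : ℕ) (C' : List ℤ), u ≤ n ∧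
      CTrace ρ Cmax (n + u) u ⟨σ, C⟩ ⟨σ', C'⟩ :=
  cache_extension_correct_general ρ Cmax hCmax n σ σ' harch C
end

section
/- (Existence of a write mechanism via the cache) In the cache-extended semantics (caches as lists of at most C_max ≥ 1 pairwise-distinct addresses with LRU replacement), there exist a program w, two disjoint sets of initial states Σ_w(0) and Σ_w(1) encoding an input bit b, a common final architectural state φ, and a function V from cache states to {0,1}, such that: every initial state in Σ_w(b) architecturally reaches φ (so the bit b is not recoverable from the architectural state φ); and for every initial state in Σ_w(b), when the cache-extended execution from that state (with empty initial cache) first reaches a state whose architectural component is φ, the cache component C satisfies V(C) = b. Concretely, w may branch on the input bit and access a distinguished address a₀ exactly when b = 1, then overwrite the input bit with 0, and V(C) = 1 iff a₀ ∈ C. -/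
/-!
The program branches on the input bit and loads from `a₀` only when `b = 1`; afterwards it
clears the input register, so both runs end in the same architectural state, but only the
`b = 1` run has brought `a₀` into the cache. The cache-extended semantics is deterministic
and total, so any trace is a prefix of the unique run, and the first time that run reaches
the final state is computed explicitly. Forgetting the cache, that run is the architectural
run with repeated states (an uncached access stalls for one step), which gives the
architectural convergence.
-/

theorem Step.eq_archStep {ρ : Prog} {σ σ' : ArchState} (h : Step ρ σ σ') :
    σ' = archStep ρ σ := by
  cases h <;> simp_all [archStep]

theorem step_archStep (ρ : Prog) (σ : ArchState) : Step ρ σ (archStep ρ σ) := by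
  cases h : ρ σ.pc with
  | const => simpa [archStep, h] using Step.const h
  | load => simpa [archStep, h] using Step.load h
  | store => simpa [archStep, h] using Step.store h
  | binop => simpa [archStep, h] using Step.binop h
  | branch rc d =>
    by_cases hc : σ.R rc = 0
    · simpa [archStep, h, hc] using Step.branchNotTaken h hc
    · simpa [archStep, h, hc] using Step.branchTaken h hc
  | jump => simpa [archStep, h] using Step.jump h

def cacheStep (ρ : Prog) (n : ℕ) (s : CState) : CState :=
  match ρ s.σ.pc with
  | .load rd ra k =>
      if s.σ.R ra + k ∈ s.C then
        ⟨⟨s.σ.pc + 1, Function.update s.σ.R rd (s.σ.M (s.σ.R ra + k)), s.σ.M⟩,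
          lru n s.C (s.σ.R ra + k)⟩
      else ⟨s.σ, lru n s.C (s.σ.R ra + k)⟩
  | .store ra k rv =>
      if s.σ.R ra + k ∈ s.C then
        ⟨⟨s.σ.pc + 1, s.σ.R, Function.update s.σ.M (s.σ.R ra + k) (s.σ.R rv)⟩,
          lru n s.C (s.σ.R ra + k)⟩
      else ⟨s.σ, lru n s.C (s.σ.R ra + k)⟩
  | _ => ⟨archStep ρ s.σ, s.C⟩

theorem CStep.eq_cacheStep {ρ : Prog} {n : ℕ} {s s' : CState} {b : Bool}
    (h : CStep ρ n s b s') : s' = cacheStep ρ n s := by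
  cases h with
  | @other σ _ _ hl hs hstep =>
    rw [hstep.eq_archStep]
    rcases h : ρ σ.pc with _ | ⟨rd, ra, k⟩ | ⟨ra, k, rv⟩ | _ | _ | _ <;>
      simp_all [cacheStep]
  | _ => simp_all [cacheStep]

theorem exists_cStep_cacheStep (ρ : Prog) (n : ℕ) (s : CState) :
    ∃ b, CStep ρ n s b (cacheStep ρ n s) := by
  obtain ⟨σ, C⟩ := s
  cases h : ρ σ.pc with
  | load rd ra k =>
    by_cases hm : σ.R ra + k ∈ C
    · exact ⟨false, by simpa [cacheStep, h, hm] using CStep.cachedLoad (n := n) h hm⟩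
    · exact ⟨true, by simpa [cacheStep, h, hm] using CStep.uncachedLoad (n := n) h hm⟩
  | store ra k rv =>
    by_cases hm : σ.R ra + k ∈ C
    · exact ⟨false, by simpa [cacheStep, h, hm] using CStep.cachedStore (n := n) h hm⟩
    · exact ⟨true, by simpa [cacheStep, h, hm] using CStep.uncachedStore (n := n) h hm⟩
  | _ =>
    exact ⟨false, by
      simpa [cacheStep, h] using
        CStep.other (n := n) (C := C) (by simp [h]) (by simp [h]) (step_archStep ρ σ)⟩

theorem CTrace.eq_iterate_cacheStep {ρ : Prog} {n m u : ℕ} {s s' : CState}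
    (h : CTrace ρ n m u s s') : s' = (cacheStep ρ n)^[m] s := by
  induction h with
  | refl => rfl
  | tail _ hstep ih => rw [Function.iterate_succ_apply', ← ih, hstep.eq_cacheStep]

theorem exists_cTrace_iterate_cacheStep (ρ : Prog) (n m : ℕ) (s : CState) :
    ∃ u, CTrace ρ n m u s ((cacheStep ρ n)^[m] s) := by
  induction m with
  | zero => exact ⟨0, .refl s⟩
  | succ m ih =>
    obtain ⟨u, h⟩ := ih
    obtain ⟨b, hstep⟩ := exists_cStep_cacheStep ρ n ((cacheStep ρ n)^[m] s)
    rw [Function.iterate_succ_apply']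
    exact ⟨_, h.tail hstep⟩

theorem CTrace.eq_iterate_of_first_hit {ρ : Prog} {n m u k : ℕ} {s₀ s : CState}
    {φ : ArchState} (hk : ((cacheStep ρ n)^[k] s₀).σ = φ)
    (hlt : ∀ j < k, ((cacheStep ρ n)^[j] s₀).σ ≠ φ)
    (h : CTrace ρ n m u s₀ s) (hs : s.σ = φ)
    (hmin : ∀ (m' u' : ℕ) (s' : CState), m' < m → CTrace ρ n m' u' s₀ s' → s'.σ ≠ φ) :
    s = (cacheStep ρ n)^[k] s₀ := by
  rw [h.eq_iterate_cacheStep] at hs ⊢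
  obtain hmk | rfl | hkm := lt_trichotomy m k
  · exact absurd hs (hlt m hmk)
  · rfl
  · obtain ⟨u', h'⟩ := exists_cTrace_iterate_cacheStep ρ n k s₀
    exact absurd hk (hmin k u' _ hkm h')

theorem cacheStep_σ_eq_or (ρ : Prog) (n : ℕ) (s : CState) :
    (cacheStep ρ n s).σ = s.σ ∨ (cacheStep ρ n s).σ = archStep ρ s.σ := by
  unfold cacheStep
  split
  · split_ifs
    · exact .inr (by simp [archStep, *])
    · exact .inl rfl
  · split_ifs
    · exact .inr (by simp [archStep, *])
    · exact .inl rfl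
  · exact .inr rfl

theorem exists_iterate_archStep_eq (ρ : Prog) (n k : ℕ) (s : CState) :
    ∃ j, ((cacheStep ρ n)^[k] s).σ = (archStep ρ)^[j] s.σ := by
  induction k with
  | zero => exact ⟨0, rfl⟩
  | succ k ih =>
    obtain ⟨j, hj⟩ := ih
    rw [Function.iterate_succ_apply']
    rcases cacheStep_σ_eq_or ρ n ((cacheStep ρ n)^[k] s) with h | h
    · exact ⟨j, h.trans hj⟩
    · exact ⟨j + 1, by rw [h, hj, Function.iterate_succ_apply']⟩

theorem lru_nil {n : ℕ} {a : ℤ} (hn : 1 ≤ n) : lru n [] a = [a] := by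
  simp [lru, hn]

theorem lru_singleton_self {n : ℕ} {a : ℤ} (hn : 1 ≤ n) : lru n [a] a = [a] := by
  simp [lru, hn]

namespace CacheWrite

def prog (a : ℤ) : Prog := fun pc =>
  if pc = 0 then .branch 0 2
  else if pc = 1 then .load 0 0 a
  else .const 0 0

/-- Register 0 holds the negated bit, since the branch at `pc = 0` skips the load when the
register is nonzero. -/
def init (b : Bool) : ArchState := ⟨0, Function.update 0 0 (if b then 0 else 1), 0⟩

def final : ArchState := ⟨3, 0, 0⟩

variable {a : ℤ} {n : ℕ}

theorem init_false_ne_true : init false ≠ init true := fun h => by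
  simpa [init] using congrArg (fun σ => σ.R 0) h

theorem exists_first_hit_final (hn : 1 ≤ n) (b : Bool) :
    ∃ k, (cacheStep (prog a) n)^[k] ⟨init b, []⟩ = ⟨final, if b then [a] else []⟩ ∧
      ∀ j < k, ((cacheStep (prog a) n)^[j] ⟨init b, []⟩).σ ≠ final := by
  cases b with
  | false =>
    refine ⟨2, by simp [cacheStep, archStep, prog, init, final], fun j hj => ?_⟩
    interval_cases j <;> simp [cacheStep, archStep, prog, init, final]
  | true =>
    refine ⟨4, ?_, fun j hj => ?_⟩
    · simp [cacheStep, archStep, prog, init, final, lru_nil hn, lru_singleton_self hn]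
    · interval_cases j <;> simp [cacheStep, archStep, prog, init, final, lru_nil hn]

end CacheWrite

/-- **Existence of a write mechanism via the cache.** In the cache-extended
semantics there exist a program `w`, disjoint nonempty sets of initial states `Σ_w(b)`
encoding an input bit `b`, a common final architectural state `φ`, a distinguished address
`a₀` and a read-out function `V` (with `V C = 1` iff `a₀ ∈ C`) such that every initial
state in `Σ_w(b)` architecturally converges to `φ`, yet when the cache-extended execution
from that state (with empty initial cache) first reaches a state whose architectural
component is `φ`, the cache satisfies `V C = b`. -/
theorem cache_write_mechanism (Cmax : ℕ) (hCmax : 1 ≤ Cmax) :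
    ∃ (w : Prog) (Sw : Bool → Set ArchState) (φ : ArchState)
      (V : List ℤ → Bool) (a₀ : ℤ),
      (∀ b : Bool, (Sw b).Nonempty) ∧
      (∀ σ : ArchState, ¬ (σ ∈ Sw false ∧ σ ∈ Sw true)) ∧
      (∀ C : List ℤ, V C = decide (a₀ ∈ C)) ∧
      (∀ (b : Bool), ∀ σ ∈ Sw b, ∃ n : ℕ, (archStep w)^[n] σ = φ) ∧
      (∀ (b : Bool), ∀ σ ∈ Sw b, ∀ (m u : ℕ) (s : CState),
        CTrace w Cmax m u ⟨σ, []⟩ s → s.σ = φ →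
        (∀ (m' u' : ℕ) (s' : CState), m' < m → CTrace w Cmax m' u' ⟨σ, []⟩ s' →
          s'.σ ≠ φ) →
        V s.C = b) := by
  have hrun := CacheWrite.exists_first_hit_final (a := 0) hCmax
  refine ⟨CacheWrite.prog 0, fun b => {CacheWrite.init b}, CacheWrite.final,
    fun C => decide (0 ∈ C), 0, fun b => Set.singleton_nonempty _, ?_, fun C => rfl, ?_, ?_⟩
  · rintro σ ⟨rfl, h⟩
    exact CacheWrite.init_false_ne_true h
  · rintro b σ rfl
    obtain ⟨k, hk, -⟩ := hrun b
    obtain ⟨j, hj⟩ := exists_iterate_archStep_eq _ Cmax k ⟨CacheWrite.init b, []⟩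
    exact ⟨j, by rw [← hj, hk]⟩
  · rintro b σ rfl m u s h hs hmin
    obtain ⟨k, hk, hlt⟩ := hrun b
    rw [h.eq_iterate_of_first_hit (by rw [hk]) hlt hs hmin, hk]
    cases b <;> simp
end
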